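/- For every integer n ≥ 3, every j ∈ {0, 1, …, 2n−1}, and every t ∈ ℝ, one has |W_j^{(n)}(t) − R_j^{(n)}(t) sin²(t−ζ_j^{(n)})| ≤ 4π/n²; in particular this difference tends to 0 uniformly in t and j as n → ∞. -/

import Mathlib

/-- The collocation points ζ_j^{(n)} = πj/n. -/
noncomputable def zetaPt (n j : ℕ) : ℝ := Real.pi * j / n

/-- The quadrature weight R_j^{(n)}(t). -/
noncomputable def Rweight (n j : ℕ) (t : ℝ) : ℝ :=
  -(2 * Real.pi / (n : ℝ)) *
      ∑ m ∈ Finset.Icc 1 (n - 1), (1 / (m : ℝ)) * Real.cos ((m : ℝ) * (t - zetaPt n j))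
    - (Real.pi / (n : ℝ) ^ 2) * Real.cos ((n : ℝ) * (t - zetaPt n j))

/-- The quadrature weight W_j^{(n)}(t). -/
noncomputable def Wweight (n j : ℕ) (t : ℝ) : ℝ :=
  (Real.pi / (n : ℝ)) *
      (1 / 4 + (2 / 3) * Real.cos (t - zetaPt n j) + (1 / 8) * Real.cos (2 * (t - zetaPt n j)))
    + (1 / 2) * Rweight n j t
    + (Real.pi / (n : ℝ)) *
        ∑ m ∈ Finset.Icc 3 (n - 1),
          ((m : ℝ) / ((m : ℝ) ^ 2 - 4)) * Real.cos ((m : ℝ) * (t - zetaPt n j))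
    + (Real.pi / (2 * ((n : ℝ) ^ 2 - 4))) * Real.cos ((n : ℝ) * (t - zetaPt n j))

open Finset Real

lemma keysum (m : ℕ) (x : ℝ) :
    ∑ k ∈ Finset.Icc 1 (m + 2), (1 / (k : ℝ)) * Real.cos ((k : ℝ) * x) * Real.cos (2 * x)
      = 1 / 4 + (2 / 3) * Real.cos x + (1 / 8) * Real.cos (2 * x)
        + ∑ k ∈ Finset.Icc 3 (m + 2), ((k : ℝ) / ((k : ℝ) ^ 2 - 4)) * Real.cos ((k : ℝ) * x)
        + 1 / (2 * ((m : ℝ) + 1)) * Real.cos (((m : ℝ) + 3) * x)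
        + 1 / (2 * ((m : ℝ) + 2)) * Real.cos (((m : ℝ) + 4) * x)
        - 1 / (2 * ((m : ℝ) + 3)) * Real.cos (((m : ℝ) + 1) * x)
        - 1 / (2 * ((m : ℝ) + 4)) * Real.cos (((m : ℝ) + 2) * x) := by
  have A1 : ∑ k ∈ Finset.Icc 1 (m+2), (1/(k:ℝ)) * Real.cos ((k:ℝ)*x) * Real.cos (2*x)
      = ∑ k ∈ Finset.Icc 1 (m+2), 1/(2*(k:ℝ)) * Real.cos (((k:ℝ)+2)*x)
        + ∑ k ∈ Finset.Icc 1 (m+2), 1/(2*(k:ℝ)) * Real.cos (((k:ℝ)-2)*x) := by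
    rw [← Finset.sum_add_distrib]
    refine Finset.sum_congr rfl fun k hk => ?_
    have hk0 : (k:ℝ) ≠ 0 := by
      have := (Finset.mem_Icc.mp hk).1
      exact Nat.cast_ne_zero.mpr (by omega)
    rw [show ((k:ℝ)+2)*x = (k:ℝ)*x + 2*x from by ring,
        show ((k:ℝ)-2)*x = (k:ℝ)*x - 2*x from by ring, Real.cos_add, Real.cos_sub]
    field_simp
    ring
  have A2 : ∑ k ∈ Finset.Icc 1 (m+2), 1/(2*(k:ℝ)) * Real.cos (((k:ℝ)+2)*x)
      = ∑ k ∈ Finset.Icc 3 (m+2), 1/(2*((k:ℝ)-2)) * Real.cos ((k:ℝ)*x)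
        + 1/(2*((m:ℝ)+1)) * Real.cos (((m:ℝ)+3)*x)
        + 1/(2*((m:ℝ)+2)) * Real.cos (((m:ℝ)+4)*x) := by
    have r : ∑ k ∈ Finset.Icc 1 (m+2), 1/(2*(k:ℝ)) * Real.cos (((k:ℝ)+2)*x)
        = ∑ k ∈ Finset.Icc 3 (m+4), 1/(2*((k:ℝ)-2)) * Real.cos ((k:ℝ)*x) := by
      rw [show Finset.Icc 3 (m+4) = Finset.map (addRightEmbedding 2) (Finset.Icc 1 (m+2)) from by
        rw [Finset.map_add_right_Icc], Finset.sum_map]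
      refine Finset.sum_congr rfl fun k _ => ?_
      simp only [addRightEmbedding_apply]
      push_cast
      ring_nf
    rw [r, show Finset.Icc 3 (m+4) = insert (m+3) (insert (m+4) (Finset.Icc 3 (m+2))) from by
        ext a; simp only [Finset.mem_insert, Finset.mem_Icc]; omega,
      Finset.sum_insert (by simp only [Finset.mem_insert, Finset.mem_Icc]; omega),
      Finset.sum_insert (by simp only [Finset.mem_insert, Finset.mem_Icc]; omega)]
    push_cast
    ring
  have A3 : ∑ k ∈ Finset.Icc 1 (m+2), 1/(2*(k:ℝ)) * Real.cos (((k:ℝ)-2)*x)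
      = 1/2 * Real.cos x + 1/4 + ∑ k ∈ Finset.Icc 3 (m+2), 1/(2*(k:ℝ)) * Real.cos (((k:ℝ)-2)*x) := by
    rw [show Finset.Icc 1 (m+2) = insert 1 (insert 2 (Finset.Icc 3 (m+2))) from by
        ext a; simp only [Finset.mem_insert, Finset.mem_Icc]; omega,
      Finset.sum_insert (by simp only [Finset.mem_insert, Finset.mem_Icc]; omega),
      Finset.sum_insert (by simp only [Finset.mem_insert, Finset.mem_Icc]; omega)]
    rw [show ((((1:ℕ)):ℝ)-2)*x = -x from by push_cast; ring,
        show ((((2:ℕ)):ℝ)-2)*x = 0 from by push_cast; ring, Real.cos_neg, Real.cos_zero]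
    push_cast
    ring
  have A4 : ∑ k ∈ Finset.Icc 3 (m+2), 1/(2*(k:ℝ)) * Real.cos (((k:ℝ)-2)*x)
      = ∑ k ∈ Finset.Icc 1 m, 1/(2*((k:ℝ)+2)) * Real.cos ((k:ℝ)*x) := by
    rw [show Finset.Icc 3 (m+2) = Finset.map (addRightEmbedding 2) (Finset.Icc 1 m) from by
      rw [Finset.map_add_right_Icc], Finset.sum_map]
    refine Finset.sum_congr rfl fun k _ => ?_
    simp only [addRightEmbedding_apply]
    push_cast
    ring_nf
  have A5 : ∑ k ∈ Finset.Icc 1 (m+2), 1/(2*((k:ℝ)+2)) * Real.cos ((k:ℝ)*x)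
      = ∑ k ∈ Finset.Icc 1 m, 1/(2*((k:ℝ)+2)) * Real.cos ((k:ℝ)*x)
        + 1/(2*((m:ℝ)+3)) * Real.cos (((m:ℝ)+1)*x)
        + 1/(2*((m:ℝ)+4)) * Real.cos (((m:ℝ)+2)*x) := by
    rw [show Finset.Icc 1 (m+2) = insert (m+1) (insert (m+2) (Finset.Icc 1 m)) from by
        ext a; simp only [Finset.mem_insert, Finset.mem_Icc]; omega,
      Finset.sum_insert (by simp only [Finset.mem_insert, Finset.mem_Icc]; omega),
      Finset.sum_insert (by simp only [Finset.mem_insert, Finset.mem_Icc]; omega)]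
    push_cast
    ring
  have A6 : ∑ k ∈ Finset.Icc 1 (m+2), 1/(2*((k:ℝ)+2)) * Real.cos ((k:ℝ)*x)
      = 1/6 * Real.cos x + 1/8 * Real.cos (2*x)
        + ∑ k ∈ Finset.Icc 3 (m+2), 1/(2*((k:ℝ)+2)) * Real.cos ((k:ℝ)*x) := by
    rw [show Finset.Icc 1 (m+2) = insert 1 (insert 2 (Finset.Icc 3 (m+2))) from by
        ext a; simp only [Finset.mem_insert, Finset.mem_Icc]; omega,
      Finset.sum_insert (by simp only [Finset.mem_insert, Finset.mem_Icc]; omega),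
      Finset.sum_insert (by simp only [Finset.mem_insert, Finset.mem_Icc]; omega)]
    rw [show (((1:ℕ)):ℝ)*x = x from by push_cast; ring,
        show (((2:ℕ)):ℝ)*x = 2*x from by push_cast; ring]
    push_cast
    ring
  have A7 : ∑ k ∈ Finset.Icc 3 (m+2), 1/(2*((k:ℝ)-2)) * Real.cos ((k:ℝ)*x)
        + ∑ k ∈ Finset.Icc 3 (m+2), 1/(2*((k:ℝ)+2)) * Real.cos ((k:ℝ)*x)
      = ∑ k ∈ Finset.Icc 3 (m+2), ((k:ℝ)/((k:ℝ)^2-4)) * Real.cos ((k:ℝ)*x) := by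
    rw [← Finset.sum_add_distrib]
    refine Finset.sum_congr rfl fun k hk => ?_
    have h3 : 3 ≤ k := (Finset.mem_Icc.mp hk).1
    have h3' : (3:ℝ) ≤ (k:ℝ) := by exact_mod_cast h3
    have hne1 : (k:ℝ) - 2 ≠ 0 := by linarith
    have hne2 : (k:ℝ) + 2 ≠ 0 := by positivity
    have hne3 : (k:ℝ)^2 - 4 ≠ 0 := by
      rw [show (k:ℝ)^2 - 4 = ((k:ℝ)-2)*((k:ℝ)+2) from by ring]
      exact mul_ne_zero hne1 hne2
    field_simp
    ring
  linear_combination A1 + A2 + A3 + A4 + A6 - A5 + A7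

set_option maxHeartbeats 1000000 in
lemma mainId (m j : ℕ) (t : ℝ) :
    Wweight (m+3) j t - Rweight (m+3) j t * Real.sin (t - zetaPt (m+3) j) ^ 2
    = Real.pi/(4*((m:ℝ)+3)^2) * Real.cos (((m:ℝ)+1)*(t - zetaPt (m+3) j))
      + Real.pi/(2*((m:ℝ)+3)*((m:ℝ)+4)) * Real.cos (((m:ℝ)+2)*(t - zetaPt (m+3) j))
      - Real.pi/(((m:ℝ)+3)*(((m:ℝ)+3)^2-4)) * Real.cos (((m:ℝ)+3)*(t - zetaPt (m+3) j))
      - Real.pi/(2*((m:ℝ)+3)*((m:ℝ)+2)) * Real.cos (((m:ℝ)+4)*(t - zetaPt (m+3) j))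
      - Real.pi/(4*((m:ℝ)+3)^2) * Real.cos (((m:ℝ)+5)*(t - zetaPt (m+3) j)) := by
  have e1 : m + 3 - 1 = m + 2 := by omega
  simp only [Wweight, Rweight, e1]
  generalize t - zetaPt (m+3) j = x
  have k1 : Real.sin x ^ 2 = 1/2 - Real.cos (2*x)/2 := Real.sin_sq_eq_half_sub x
  have k2 : (∑ k ∈ Finset.Icc 1 (m+2), (1/(k:ℝ)) * Real.cos ((k:ℝ)*x)) * Real.cos (2*x)
      = 1 / 4 + (2 / 3) * Real.cos x + (1 / 8) * Real.cos (2 * x)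
        + ∑ k ∈ Finset.Icc 3 (m + 2), ((k : ℝ) / ((k : ℝ) ^ 2 - 4)) * Real.cos ((k : ℝ) * x)
        + 1 / (2 * ((m : ℝ) + 1)) * Real.cos (((m : ℝ) + 3) * x)
        + 1 / (2 * ((m : ℝ) + 2)) * Real.cos (((m : ℝ) + 4) * x)
        - 1 / (2 * ((m : ℝ) + 3)) * Real.cos (((m : ℝ) + 1) * x)
        - 1 / (2 * ((m : ℝ) + 4)) * Real.cos (((m : ℝ) + 2) * x) := by
    rw [Finset.sum_mul]
    exact keysum m x
  have k3 : Real.cos (((m:ℝ)+3)*x) * Real.cos (2*x)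
      = 1/2 * Real.cos (((m:ℝ)+5)*x) + 1/2 * Real.cos (((m:ℝ)+1)*x) := by
    have h1 := Real.cos_add (((m:ℝ)+3)*x) (2*x)
    have h2 := Real.cos_sub (((m:ℝ)+3)*x) (2*x)
    rw [show ((m:ℝ)+3)*x + 2*x = ((m:ℝ)+5)*x from by ring] at h1
    rw [show ((m:ℝ)+3)*x - 2*x = ((m:ℝ)+1)*x from by ring] at h2
    linarith
  have hm : (0:ℝ) ≤ (m:ℝ) := Nat.cast_nonneg m
  have hN0 : ((m:ℝ)+3) ≠ 0 := by positivity
  have hN1 : ((m:ℝ)+1) ≠ 0 := by positivity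
  have hN2 : ((m:ℝ)+2) ≠ 0 := by positivity
  have hN4 : ((m:ℝ)+4) ≠ 0 := by positivity
  have hNs : ((m:ℝ)+3)^2 - 4 ≠ 0 := by nlinarith
  push_cast
  linear_combination (norm := (field_simp; ring))
    (-(-(2 * Real.pi / ((m:ℝ)+3)) *
        (∑ k ∈ Finset.Icc 1 (m+2), (1/(k:ℝ)) * Real.cos ((k:ℝ)*x))
      - (Real.pi / ((m:ℝ)+3) ^ 2) * Real.cos (((m:ℝ)+3)*x))) * k1
    + (-(Real.pi/((m:ℝ)+3))) * k2
    + (-(Real.pi/(2*((m:ℝ)+3)^2))) * k3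

theorem stmt13 (n : ℕ) (hn : 3 ≤ n) (j : ℕ) (hj : j < 2 * n) (t : ℝ) :
    |Wweight n j t - Rweight n j t * Real.sin (t - zetaPt n j) ^ 2|
      ≤ 4 * Real.pi / (n : ℝ) ^ 2 := by
  obtain ⟨m, rfl⟩ : ∃ m, n = m + 3 := ⟨n - 3, by omega⟩
  rw [mainId]
  set x := t - zetaPt (m+3) j with hx
  have hπ := Real.pi_pos
  have hm : (0:ℝ) ≤ (m:ℝ) := Nat.cast_nonneg m
  have habs : ∀ c θ : ℝ, 0 < c → |c * Real.cos θ| ≤ c := by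
    intro c θ hc
    rw [abs_mul, abs_of_pos hc]
    exact mul_le_of_le_one_right hc.le (Real.abs_cos_le_one θ)
  have b1 := habs (Real.pi/(4*((m:ℝ)+3)^2)) (((m:ℝ)+1)*x) (by positivity)
  have b2 := habs (Real.pi/(2*((m:ℝ)+3)*((m:ℝ)+4))) (((m:ℝ)+2)*x) (by positivity)
  have b3 := habs (Real.pi/(((m:ℝ)+3)*(((m:ℝ)+3)^2-4))) (((m:ℝ)+3)*x) (by
    have : (0:ℝ) < ((m:ℝ)+3)^2 - 4 := by nlinarith
    positivity)
  have b4 := habs (Real.pi/(2*((m:ℝ)+3)*((m:ℝ)+2))) (((m:ℝ)+4)*x) (by positivity)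
  have b5 := habs (Real.pi/(4*((m:ℝ)+3)^2)) (((m:ℝ)+5)*x) (by positivity)
  have tri : ∀ a b c d e : ℝ, |a + b - c - d - e| ≤ |a| + |b| + |c| + |d| + |e| := by
    intro a b c d e
    rw [abs_le]
    constructor <;>
      [ (nlinarith [le_abs_self a, le_abs_self b, le_abs_self c, le_abs_self d, le_abs_self e,
          neg_abs_le a, neg_abs_le b, neg_abs_le c, neg_abs_le d, neg_abs_le e]);
        (nlinarith [le_abs_self a, le_abs_self b, le_abs_self c, le_abs_self d, le_abs_self e,
          neg_abs_le a, neg_abs_le b, neg_abs_le c, neg_abs_le d, neg_abs_le e]) ]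
  refine le_trans (tri _ _ _ _ _) ?_
  -- each coefficient bound by multiples of pi/(m+3)^2
  have q2 : Real.pi/(2*((m:ℝ)+3)*((m:ℝ)+4)) ≤ Real.pi/(2*((m:ℝ)+3)^2) := by
    apply div_le_div_of_nonneg_left hπ.le (by positivity)
    nlinarith
  have q3 : Real.pi/(((m:ℝ)+3)*(((m:ℝ)+3)^2-4)) ≤ Real.pi/(((m:ℝ)+3)^2) := by
    apply div_le_div_of_nonneg_left hπ.le (by positivity)
    nlinarith
  have q4 : Real.pi/(2*((m:ℝ)+3)*((m:ℝ)+2)) ≤ Real.pi/(((m:ℝ)+3)^2) := by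
    apply div_le_div_of_nonneg_left hπ.le (by positivity)
    nlinarith
  have hA : ((m:ℝ)+3) ≠ 0 := by positivity
  have r1 : Real.pi/(4*((m:ℝ)+3)^2) = (1/4)*(Real.pi/((m:ℝ)+3)^2) := by field_simp
  have r2 : Real.pi/(2*((m:ℝ)+3)^2) = (1/2)*(Real.pi/((m:ℝ)+3)^2) := by field_simp
  have r3 : 4 * Real.pi / ((↑(m+3)):ℝ)^2 = 4*(Real.pi/((m:ℝ)+3)^2) := by push_cast; field_simp
  have hpos : (0:ℝ) ≤ Real.pi/((m:ℝ)+3)^2 := by positivity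
  rw [r3]
  linarith
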